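/- arXiv:1811.01851 — 2 statements merged into one kernel-verified Lean document; each statement's English description precedes it below -/
import Mathlib

section
/- Let p be a prime and let v₁, v₂, v₃, v₄ be a basis of F_p^4. The decomposable elements of the 2-dimensional subspace of ⋀²(F_p^4) spanned by v₁ ∧ v₂ and v₃ ∧ v₄ are exactly the scalar multiples of v₁ ∧ v₂ together with the scalar multiples of v₃ ∧ v₄. -/
open Module

noncomputable section

/-- Coordinate functional on the exterior algebra picking out the `vᵢ ∧ vⱼ`
coefficient of a degree-2 element. -/
noncomputable def phiAux {K M : Type*} [CommRing K] [AddCommGroup M] [Module K M]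
    (v : Basis (Fin 4) K M) (i j : Fin 4) : ExteriorAlgebra K M →ₗ[K] K :=
  ExteriorAlgebra.liftAlternating
    (Function.update (fun n => (0 : M [⋀^Fin n]→ₗ[K] K)) 2
      ((Matrix.detRowAlternating (R := K) (n := Fin 2)).compLinearMap
        (LinearMap.pi (fun b : Fin 2 => v.coord (![i, j] b)))))

theorem phiAux_ι_mul {K M : Type*} [CommRing K] [AddCommGroup M] [Module K M]
    (v : Basis (Fin 4) K M) (i j : Fin 4) (a b : M) :
    phiAux v i j (ExteriorAlgebra.ι K a * ExteriorAlgebra.ι K b) =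
      v.repr a i * v.repr b j - v.repr a j * v.repr b i := by
  have h : ExteriorAlgebra.ι K a * ExteriorAlgebra.ι K b
      = ExteriorAlgebra.ιMulti K 2 ![a, b] := by
    simp [ExteriorAlgebra.ιMulti_apply, List.ofFn_succ]
  rw [h, phiAux, ExteriorAlgebra.liftAlternating_apply_ιMulti, Function.update_self,
    AlternatingMap.compLinearMap_apply]
  have hdet : ((Matrix.detRowAlternating (R := K) (n := Fin 2))
      fun r => (LinearMap.pi fun c : Fin 2 => v.coord (![i, j] c)) (![a, b] r)) =
      Matrix.det (Matrix.of fun r c : Fin 2 => v.coord (![i, j] c) (![a, b] r)) := rfl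
  rw [hdet, Matrix.det_fin_two]
  simp [Basis.coord_apply]

/-- for a prime `p` and a basis `v₁, v₂, v₃, v₄` of `F_p^4`, the
decomposable elements of the 2-dimensional subspace of `⋀²(F_p^4)` spanned by
`v₁ ∧ v₂` and `v₃ ∧ v₄` are exactly the scalar multiples of `v₁ ∧ v₂` together with
the scalar multiples of `v₃ ∧ v₄`. -/
theorem stmt10 (p : ℕ) (hp : p.Prime) (v : Basis (Fin 4) (ZMod p) (Fin 4 → ZMod p)) :
    {x : ExteriorAlgebra (ZMod p) (Fin 4 → ZMod p) |
        x ∈ Submodule.span (ZMod p)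
          {ExteriorAlgebra.ι (ZMod p) (v 0) * ExteriorAlgebra.ι (ZMod p) (v 1),
           ExteriorAlgebra.ι (ZMod p) (v 2) * ExteriorAlgebra.ι (ZMod p) (v 3)} ∧
        ∃ a b : Fin 4 → ZMod p,
          x = ExteriorAlgebra.ι (ZMod p) a * ExteriorAlgebra.ι (ZMod p) b} =
      {x : ExteriorAlgebra (ZMod p) (Fin 4 → ZMod p) |
        (∃ c : ZMod p,
          x = c • (ExteriorAlgebra.ι (ZMod p) (v 0) * ExteriorAlgebra.ι (ZMod p) (v 1))) ∨
        (∃ c : ZMod p,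
          x = c • (ExteriorAlgebra.ι (ZMod p) (v 2) * ExteriorAlgebra.ι (ZMod p) (v 3)))} := by
  haveI : Fact p.Prime := ⟨hp⟩
  set K := ZMod p
  set e01 := ExteriorAlgebra.ι K (v 0) * ExteriorAlgebra.ι K (v 1) with he01
  set e23 := ExteriorAlgebra.ι K (v 2) * ExteriorAlgebra.ι K (v 3) with he23
  ext x
  simp only [Set.mem_setOf_eq]
  constructor
  · rintro ⟨hx, a, b, rfl⟩
    rw [Submodule.mem_span_pair] at hx
    obtain ⟨s, t, hst⟩ := hx
    set A : Fin 4 → K := fun i => v.repr a i with hA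
    set B : Fin 4 → K := fun i => v.repr b i with hB
    have key : ∀ i j : Fin 4, A i * B j - A j * B i =
        s * phiAux v i j e01 + t * phiAux v i j e23 := by
      intro i j
      rw [← phiAux_ι_mul v i j a b, ← hst, map_add, map_smul, map_smul, smul_eq_mul,
        smul_eq_mul]
    have hrs : ∀ i j k l : Fin 4,
        phiAux v i j (ExteriorAlgebra.ι K (v k) * ExteriorAlgebra.ι K (v l)) =
        (if k = i then 1 else 0) * (if l = j then 1 else 0)
          - (if k = j then 1 else 0) * (if l = i then 1 else 0) := by
      intro i j k l
      rw [phiAux_ι_mul]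
      simp [Basis.repr_self, Finsupp.single_apply]
    have h01 := key 0 1
    have h23 := key 2 3
    have h02 := key 0 2
    have h03 := key 0 3
    have h12 := key 1 2
    have h13 := key 1 3
    rw [he01, he23, hrs, hrs] at h01 h23 h02 h03 h12 h13
    norm_num [Fin.ext_iff, show ((3 : Fin 4) : ℕ) = 3 from rfl] at h01 h23 h02 h03 h12 h13
    have hst0 : s * t = 0 := by
      rw [← h01, ← h23]
      linear_combination (A 1 * B 3 - A 3 * B 1) * h02 - (A 1 * B 2 - A 2 * B 1) * h03
    rcases mul_eq_zero.mp hst0 with hs | ht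
    · right
      exact ⟨t, by rw [← hst, hs, zero_smul, zero_add]⟩
    · left
      exact ⟨s, by rw [← hst, ht, zero_smul, add_zero]⟩
  · rintro (⟨c, rfl⟩ | ⟨c, rfl⟩)
    · refine ⟨Submodule.smul_mem _ c (Submodule.subset_span (by simp)), c • v 0, v 1, ?_⟩
      rw [map_smul, smul_mul_assoc]
    · refine ⟨Submodule.smul_mem _ c (Submodule.subset_span (by simp)), c • v 2, v 3, ?_⟩
      rw [map_smul, smul_mul_assoc]

end
end

section
/- Let d ≥ 4 and let V = ℚ_p^d with standard basis e₁, …, e_d. Choose scalars λ_{ij} ∈ ℚ_p for 3 ≤ i < j ≤ d that are nonzero and pairwise distinct. Set L₁ = span(e₁, e₂) and L_{ij} = span(e₁ + λ_{ij}e_i, e₂ + λ_{ij}e_j). This is a family of binom(d−2,2) + 1 two-dimensional subspaces of V, and for every member L of the family one has (Σ over all members L' of the family of ⋀²L') + (L ∧ V) = ⋀²V, where L ∧ V denotes the span of {u ∧ v : u ∈ L, v ∈ V}; in particular r = binom(d−2,2) + 1 two-dimensional subspaces satisfying the submersion criterion for the decomposability morphism exist. -/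
open Module

set_option maxHeartbeats 1000000

noncomputable section

variable (K : Type*) [CommRing K] (V : Type*) [AddCommGroup V] [Module K V]

/-- The second exterior power `⋀² V`, realised as the span of all decomposable
wedges inside the exterior algebra. -/
def grade2 : Submodule K (ExteriorAlgebra K V) :=
  Submodule.span K
    {x | ∃ v w : V, x = ExteriorAlgebra.ι K v * ExteriorAlgebra.ι K w}

/-- For a subspace `L ≤ V`, the subspace `⋀² L` of `⋀² V`. -/
def wedgeSquare (L : Submodule K V) : Submodule K (ExteriorAlgebra K V) :=
  Submodule.span K
    {x | ∃ v w : V, v ∈ L ∧ w ∈ L ∧ x = ExteriorAlgebra.ι K v * ExteriorAlgebra.ι K w}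

/-- For a subspace `U ≤ V`, the subspace `U ∧ V` of `⋀² V`. -/
def wedgeWithV (U : Submodule K V) : Submodule K (ExteriorAlgebra K V) :=
  Submodule.span K
    {x | ∃ v w : V, v ∈ U ∧ x = ExteriorAlgebra.ι K v * ExteriorAlgebra.ι K w}

section AuxLemmas

open ExteriorAlgebra

variable {K₁ : Type*} [CommRing K₁] {V₁ : Type*} [AddCommGroup V₁] [Module K₁ V₁]

lemma wedge_swap (x y : V₁) : ι K₁ x * ι K₁ y = -(ι K₁ y * ι K₁ x) :=
  eq_neg_of_add_eq_zero_left (ι_add_mul_swap x y)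

lemma wedge_expand' (e0 e1 ea eb : V₁) (μ : K₁) :
    (μ * μ) • (ι K₁ ea * ι K₁ eb) =
      ι K₁ (e0 + μ • ea) * ι K₁ (e1 + μ • eb) - ι K₁ e0 * ι K₁ e1
        - μ • (ι K₁ e0 * ι K₁ eb) - μ • (ι K₁ ea * ι K₁ e1) := by
  simp only [map_add, map_smul, add_mul, mul_add, smul_mul_assoc, mul_smul_comm, smul_smul]
  module

lemma wedge_step1 (e0 e1 ei ej : V₁) (lm : K₁) :
    (lm * lm) • (ι K₁ ei * ι K₁ ej) =
      ι K₁ (e0 + lm • ei) * ι K₁ (e1 + lm • ej) - ι K₁ (e0 + lm • ei) * ι K₁ e1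
        + ι K₁ (e1 + lm • ej) * ι K₁ e0 + ι K₁ e0 * ι K₁ e1 := by
  simp only [map_add, map_smul, add_mul, mul_add, smul_mul_assoc, mul_smul_comm, smul_smul]
  rw [wedge_swap e1 e0, wedge_swap ej e0]
  module

lemma wedge_core (e0 e1 ea eb ei ej : V₁) (μ lm : K₁) :
    (μ * μ) • (ι K₁ ea * ι K₁ eb) - (μ * lm) • (ι K₁ ei * ι K₁ eb)
        - (μ * lm) • (ι K₁ ea * ι K₁ ej) =
      ι K₁ (e0 + μ • ea) * ι K₁ (e1 + μ • eb) - ι K₁ e0 * ι K₁ e1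
        - μ • (ι K₁ (e0 + lm • ei) * ι K₁ eb) + μ • (ι K₁ (e1 + lm • ej) * ι K₁ ea) := by
  simp only [map_add, map_smul, add_mul, mul_add, smul_mul_assoc, mul_smul_comm, smul_smul]
  rw [wedge_swap e1 ea, wedge_swap ej ea]
  module

lemma rank2 {F : Type*} [Field F] {n : ℕ} {x y : Fin n → F} {c₁ c₂ : Fin n}
    (h1 : x c₁ = 1) (h2 : y c₁ = 0) (h3 : x c₂ = 0) (h4 : y c₂ = 1) :
    finrank F (Submodule.span F ({x, y} : Set (Fin n → F))) = 2 := by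
  have hset : ({x, y} : Set (Fin n → F)) = Set.range ![x, y] := by
    simp [Matrix.range_cons, Matrix.range_empty, Set.pair_comm]
  have hli : LinearIndependent F ![x, y] := by
    rw [LinearIndependent.pair_iff]
    intro s t hst
    constructor
    · simpa [h1, h2] using congr_fun hst c₁
    · simpa [h3, h4] using congr_fun hst c₂
  rw [hset, finrank_span_eq_card hli, Fintype.card_fin]

lemma cardaux (d : ℕ) :
    Nat.card {q : Fin d × Fin d // 2 ≤ (q.1 : ℕ) ∧ q.1 < q.2} = (d - 2).choose 2 := by
  classical
  rw [Nat.card_eq_fintype_card, Fintype.card_subtype]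
  have h1 : (Finset.univ.filter fun q : Fin d × Fin d => 2 ≤ (q.1 : ℕ) ∧ q.1 < q.2).card
      = ∑ i : Fin d, if 2 ≤ (i : ℕ) then (d - 1 - (i : ℕ)) else 0 := by
    rw [Finset.card_filter, Fintype.sum_prod_type]
    refine Finset.sum_congr rfl fun i _ => ?_
    by_cases hi : 2 ≤ (i : ℕ)
    · simp only [hi, true_and, if_true]
      have : (Finset.univ.filter fun j : Fin d => i < j) = Finset.Ioi i := by
        ext j; simp
      rw [← Finset.card_filter, this, Fin.card_Ioi]
    · simp [hi]
  rw [h1, Fin.sum_univ_eq_sum_range (fun i => if 2 ≤ i then (d - 1 - i) else 0) d]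
  have h3 : (Finset.range d).filter (fun i => 2 ≤ i) = Finset.Ico 2 d := by
    ext i; simp [Finset.mem_Ico]; omega
  rw [← Finset.sum_filter, h3, Finset.sum_Ico_eq_sum_range]
  have h4 : ∑ i ∈ Finset.range (d - 2), (d - 1 - (2 + i))
      = ∑ i ∈ Finset.range (d - 2), (d - 2 - 1 - i) :=
    Finset.sum_congr rfl fun i _ => by omega
  rw [h4, Finset.sum_range_reflect (fun i => i) (d - 2), Finset.sum_range_id,
    Nat.choose_two_right]

end AuxLemmas

open ExteriorAlgebra in
/-- for `d ≥ 4`, `V = ℚ_p^d` with standard basis `e₁, …, e_d` (here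
indexed by `Fin d`, so the pairs `3 ≤ i < j ≤ d` become pairs of indices with
`2 ≤ i < j < d`), and nonzero pairwise distinct scalars `λ_{ij}`, the family
consisting of `L₁ = ⟨e₁, e₂⟩` together with
`L_{ij} = ⟨e₁ + λ_{ij} e_i, e₂ + λ_{ij} e_j⟩` is a family of `binom(d-2,2) + 1`
two-dimensional subspaces of `V` such that for every member `L` of the family,
`(Σ_{L'} ⋀²L') + (L ∧ V) = ⋀²V`; in particular `r = binom(d-2,2) + 1`
two-dimensional subspaces satisfying the submersion criterion exist. -/
theorem stmt16 (p : ℕ) [Fact p.Prime] (d : ℕ) (hd : 4 ≤ d)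
    (e : Fin d → (Fin d → ℚ_[p])) (he : ∀ k, e k = Pi.single k (1 : ℚ_[p]))
    (lam : {q : Fin d × Fin d // 2 ≤ (q.1 : ℕ) ∧ q.1 < q.2} → ℚ_[p])
    (h0 : ∀ q, lam q ≠ 0) (hinj : Function.Injective lam)
    (L : Option {q : Fin d × Fin d // 2 ≤ (q.1 : ℕ) ∧ q.1 < q.2} →
      Submodule ℚ_[p] (Fin d → ℚ_[p]))
    (hL1 : L none = Submodule.span ℚ_[p] {e ⟨0, by omega⟩, e ⟨1, by omega⟩})
    (hLij : ∀ q, L (some q) = Submodule.span ℚ_[p]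
      {e ⟨0, by omega⟩ + lam q • e q.1.1, e ⟨1, by omega⟩ + lam q • e q.1.2}) :
    Nat.card (Option {q : Fin d × Fin d // 2 ≤ (q.1 : ℕ) ∧ q.1 < q.2}) =
        (d - 2).choose 2 + 1 ∧
      (∀ o, finrank ℚ_[p] (L o) = 2) ∧
      (∀ o, (⨆ o', wedgeSquare ℚ_[p] (Fin d → ℚ_[p]) (L o')) ⊔
          wedgeWithV ℚ_[p] (Fin d → ℚ_[p]) (L o) =
        grade2 ℚ_[p] (Fin d → ℚ_[p])) := by
  have hd0 : 0 < d := by omega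
  have hd1 : 1 < d := by omega
  have heval : ∀ k l : Fin d, e k l = if l = k then (1 : ℚ_[p]) else 0 := fun k l => by
    rw [he k]; exact Pi.single_apply k 1 l
  refine ⟨?_, ?_, ?_⟩
  · -- cardinality
    rw [Nat.card_eq_fintype_card, Fintype.card_option, ← Nat.card_eq_fintype_card, cardaux d]
  · -- finrank
    intro o
    rcases o with _ | q
    · rw [hL1]
      refine rank2 (c₁ := ⟨0, hd0⟩) (c₂ := ⟨1, hd1⟩) ?_ ?_ ?_ ?_ <;> simp [heval]
    · have hi2 : 2 ≤ (q.1.1 : ℕ) := q.2.1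
      have hij : (q.1.1 : ℕ) < (q.1.2 : ℕ) := q.2.2
      have hne1 : (⟨0, hd0⟩ : Fin d) ≠ q.1.1 := Fin.ne_of_val_ne (show (0:ℕ) ≠ (q.1.1:ℕ) by omega)
      have hne2 : (⟨0, hd0⟩ : Fin d) ≠ q.1.2 := Fin.ne_of_val_ne (show (0:ℕ) ≠ (q.1.2:ℕ) by omega)
      have hne3 : (⟨1, hd1⟩ : Fin d) ≠ q.1.1 := Fin.ne_of_val_ne (show (1:ℕ) ≠ (q.1.1:ℕ) by omega)
      have hne4 : (⟨1, hd1⟩ : Fin d) ≠ q.1.2 := Fin.ne_of_val_ne (show (1:ℕ) ≠ (q.1.2:ℕ) by omega)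
      rw [hLij q]
      refine rank2 (c₁ := ⟨0, hd0⟩) (c₂ := ⟨1, hd1⟩) ?_ ?_ ?_ ?_ <;>
        simp [heval, hne1, hne2, hne3, hne4]
  · -- the sup condition
    intro o
    set M := (⨆ o', wedgeSquare ℚ_[p] (Fin d → ℚ_[p]) (L o')) ⊔
        wedgeWithV ℚ_[p] (Fin d → ℚ_[p]) (L o) with hM
    have memS : ∀ (o' : Option {q : Fin d × Fin d // 2 ≤ (q.1 : ℕ) ∧ q.1 < q.2})
        (u v : Fin d → ℚ_[p]), u ∈ L o' → v ∈ L o' →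
        ι ℚ_[p] u * ι ℚ_[p] v ∈ M := fun o' u v hu hv => by
      rw [hM]
      exact Submodule.mem_sup_left (Submodule.mem_iSup_of_mem o'
        (Submodule.subset_span ⟨u, v, hu, hv, rfl⟩))
    have memW : ∀ (u v : Fin d → ℚ_[p]), u ∈ L o →
        ι ℚ_[p] u * ι ℚ_[p] v ∈ M := fun u v hu => by
      rw [hM]
      exact Submodule.mem_sup_right (Submodule.subset_span ⟨u, v, hu, rfl⟩)
    have he0L : e ⟨0, hd0⟩ ∈ L none := by
      rw [hL1]; exact Submodule.subset_span (Or.inl rfl)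
    have he1L : e ⟨1, hd1⟩ ∈ L none := by
      rw [hL1]; exact Submodule.subset_span (Or.inr rfl)
    have m01 : ι ℚ_[p] (e ⟨0, hd0⟩) * ι ℚ_[p] (e ⟨1, hd1⟩) ∈ M := memS none _ _ he0L he1L
    have hsq : ∀ c : Fin d, ι ℚ_[p] (e c) * ι ℚ_[p] (e c) ∈ M := fun c => by
      rw [ι_sq_zero]; exact zero_mem M
    have hsup_le : M ≤ grade2 ℚ_[p] (Fin d → ℚ_[p]) := by
      rw [hM]
      refine sup_le (iSup_le fun o' => ?_) ?_
      · refine Submodule.span_le.2 ?_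
        rintro x ⟨v, w, -, -, rfl⟩
        exact Submodule.subset_span ⟨v, w, rfl⟩
      · refine Submodule.span_le.2 ?_
        rintro x ⟨v, w, -, rfl⟩
        exact Submodule.subset_span ⟨v, w, rfl⟩
    have key : ∀ a b : Fin d, ι ℚ_[p] (e a) * ι ℚ_[p] (e b) ∈ M := by
      rcases o with _ | q₀
      · -- o = none
        have key2 : ∀ a b : Fin d, 2 ≤ (a : ℕ) → (a : ℕ) < (b : ℕ) →
            ι ℚ_[p] (e a) * ι ℚ_[p] (e b) ∈ M := by
          intro a b ha hab
          have habf : a < b := Fin.lt_def.mpr hab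
          have hga : e ⟨0, hd0⟩ + lam ⟨(a, b), ⟨ha, habf⟩⟩ • e a ∈ L (some ⟨(a, b), ⟨ha, habf⟩⟩) := by
            rw [hLij]; exact Submodule.subset_span (Or.inl rfl)
          have hgb : e ⟨1, hd1⟩ + lam ⟨(a, b), ⟨ha, habf⟩⟩ • e b ∈ L (some ⟨(a, b), ⟨ha, habf⟩⟩) := by
            rw [hLij]; exact Submodule.subset_span (Or.inr rfl)
          have ma1 : ι ℚ_[p] (e a) * ι ℚ_[p] (e ⟨1, hd1⟩) ∈ M := by
            rw [wedge_swap]; exact M.neg_mem (memW _ _ he1L)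
          refine (Submodule.smul_mem_iff M (mul_ne_zero (h0 ⟨(a, b), ⟨ha, habf⟩⟩)
            (h0 ⟨(a, b), ⟨ha, habf⟩⟩))).1 ?_
          have h2 := M.sub_mem (M.sub_mem (M.sub_mem (memS _ _ _ hga hgb) m01)
            (M.smul_mem (lam ⟨(a, b), ⟨ha, habf⟩⟩) (memW _ (e b) he0L)))
            (M.smul_mem (lam ⟨(a, b), ⟨ha, habf⟩⟩) ma1)
          convert h2 using 1
          exact wedge_expand' (e ⟨0, hd0⟩) (e ⟨1, hd1⟩) (e a) (e b) (lam ⟨(a, b), ⟨ha, habf⟩⟩)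
        intro a b
        rcases Nat.lt_or_ge (a : ℕ) 2 with ha | ha
        · have hmem : e a ∈ L none := by
            rcases (by omega : (a : ℕ) = 0 ∨ (a : ℕ) = 1) with h | h
            · rw [show a = (⟨0, hd0⟩ : Fin d) from Fin.ext h]; exact he0L
            · rw [show a = (⟨1, hd1⟩ : Fin d) from Fin.ext h]; exact he1L
          exact memW _ _ hmem
        rcases Nat.lt_or_ge (b : ℕ) 2 with hb | hb
        · have hmem : e b ∈ L none := by
            rcases (by omega : (b : ℕ) = 0 ∨ (b : ℕ) = 1) with h | h
            · rw [show b = (⟨0, hd0⟩ : Fin d) from Fin.ext h]; exact he0L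
            · rw [show b = (⟨1, hd1⟩ : Fin d) from Fin.ext h]; exact he1L
          rw [wedge_swap]; exact M.neg_mem (memW _ _ hmem)
        rcases lt_trichotomy (a : ℕ) (b : ℕ) with h | h | h
        · exact key2 a b ha h
        · rw [show a = b from Fin.ext h]; exact hsq b
        · rw [wedge_swap]; exact M.neg_mem (key2 b a hb h)
      · -- o = some q₀
        have hi₀ : 2 ≤ (q₀.1.1 : ℕ) := q₀.2.1
        have hij : (q₀.1.1 : ℕ) < (q₀.1.2 : ℕ) := q₀.2.2
        have hu1 : e ⟨0, hd0⟩ + lam q₀ • e q₀.1.1 ∈ L (some q₀) := by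
          rw [hLij]; exact Submodule.subset_span (Or.inl rfl)
        have hu2 : e ⟨1, hd1⟩ + lam q₀ • e q₀.1.2 ∈ L (some q₀) := by
          rw [hLij]; exact Submodule.subset_span (Or.inr rfl)
        have mu1 : ∀ v, ι ℚ_[p] (e ⟨0, hd0⟩ + lam q₀ • e q₀.1.1) * ι ℚ_[p] v ∈ M :=
          fun v => memW _ _ hu1
        have mu2 : ∀ v, ι ℚ_[p] (e ⟨1, hd1⟩ + lam q₀ • e q₀.1.2) * ι ℚ_[p] v ∈ M :=
          fun v => memW _ _ hu2
        have mstep1 : ι ℚ_[p] (e q₀.1.1) * ι ℚ_[p] (e q₀.1.2) ∈ M := by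
          refine (Submodule.smul_mem_iff M (mul_ne_zero (h0 q₀) (h0 q₀))).1 ?_
          have h2 := M.add_mem (M.add_mem (M.sub_mem
            (mu1 (e ⟨1, hd1⟩ + lam q₀ • e q₀.1.2)) (mu1 (e ⟨1, hd1⟩))) (mu2 (e ⟨0, hd0⟩))) m01
          convert h2 using 1
          exact wedge_step1 (e ⟨0, hd0⟩) (e ⟨1, hd1⟩) (e q₀.1.1) (e q₀.1.2) (lam q₀)
        have core : ∀ (a b : Fin d) (ha2 : 2 ≤ (a : ℕ)) (habf : a < b),
            (lam ⟨(a, b), ⟨ha2, habf⟩⟩ * lam ⟨(a, b), ⟨ha2, habf⟩⟩) •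
                (ι ℚ_[p] (e a) * ι ℚ_[p] (e b))
              - (lam ⟨(a, b), ⟨ha2, habf⟩⟩ * lam q₀) •
                (ι ℚ_[p] (e q₀.1.1) * ι ℚ_[p] (e b))
              - (lam ⟨(a, b), ⟨ha2, habf⟩⟩ * lam q₀) •
                (ι ℚ_[p] (e a) * ι ℚ_[p] (e q₀.1.2)) ∈ M := by
          intro a b ha2 habf
          have hga : e ⟨0, hd0⟩ + lam ⟨(a, b), ⟨ha2, habf⟩⟩ • e a
              ∈ L (some ⟨(a, b), ⟨ha2, habf⟩⟩) := by
            rw [hLij]; exact Submodule.subset_span (Or.inl rfl)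
          have hgb : e ⟨1, hd1⟩ + lam ⟨(a, b), ⟨ha2, habf⟩⟩ • e b
              ∈ L (some ⟨(a, b), ⟨ha2, habf⟩⟩) := by
            rw [hLij]; exact Submodule.subset_span (Or.inr rfl)
          have h2 := M.add_mem (M.sub_mem (M.sub_mem (memS _ _ _ hga hgb) m01)
            (M.smul_mem (lam ⟨(a, b), ⟨ha2, habf⟩⟩) (mu1 (e b))))
            (M.smul_mem (lam ⟨(a, b), ⟨ha2, habf⟩⟩) (mu2 (e a)))
          convert h2 using 1
          exact wedge_core (e ⟨0, hd0⟩) (e ⟨1, hd1⟩) (e a) (e b) (e q₀.1.1) (e q₀.1.2)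
            (lam ⟨(a, b), ⟨ha2, habf⟩⟩) (lam q₀)
        have hcoef : ∀ (q : {q : Fin d × Fin d // 2 ≤ (q.1 : ℕ) ∧ q.1 < q.2}), q ≠ q₀ →
            lam q * lam q - lam q * lam q₀ ≠ 0 := fun q hq => by
          rw [← mul_sub]
          exact mul_ne_zero (h0 q) (sub_ne_zero.2 fun h => hq (hinj h))
        have H1 : ∀ b : Fin d, (q₀.1.1 : ℕ) < (b : ℕ) → b ≠ q₀.1.2 →
            ι ℚ_[p] (e q₀.1.1) * ι ℚ_[p] (e b) ∈ M := by
          intro b hb hbj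
          have habf : q₀.1.1 < b := Fin.lt_def.mpr hb
          have hqne : (⟨(q₀.1.1, b), ⟨hi₀, habf⟩⟩ :
              {q : Fin d × Fin d // 2 ≤ (q.1 : ℕ) ∧ q.1 < q.2}) ≠ q₀ := fun h => hbj
            (congrArg (fun x => x.1.2) h)
          refine (Submodule.smul_mem_iff M (hcoef _ hqne)).1 ?_
          have h2 := M.add_mem (core q₀.1.1 b hi₀ habf)
            (M.smul_mem (lam ⟨(q₀.1.1, b), ⟨hi₀, habf⟩⟩ * lam q₀) mstep1)
          convert h2 using 1
          module
        have H2 : ∀ a : Fin d, 2 ≤ (a : ℕ) → (a : ℕ) < (q₀.1.2 : ℕ) → a ≠ q₀.1.1 →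
            ι ℚ_[p] (e a) * ι ℚ_[p] (e q₀.1.2) ∈ M := by
          intro a ha2 ha hai
          have habf : a < q₀.1.2 := Fin.lt_def.mpr ha
          have hqne : (⟨(a, q₀.1.2), ⟨ha2, habf⟩⟩ :
              {q : Fin d × Fin d // 2 ≤ (q.1 : ℕ) ∧ q.1 < q.2}) ≠ q₀ := fun h => hai
            (congrArg (fun x => x.1.1) h)
          refine (Submodule.smul_mem_iff M (hcoef _ hqne)).1 ?_
          have h2 := M.add_mem (core a q₀.1.2 ha2 habf)
            (M.smul_mem (lam ⟨(a, q₀.1.2), ⟨ha2, habf⟩⟩ * lam q₀) mstep1)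
          convert h2 using 1
          module
        have H1' : ∀ b : Fin d, 2 ≤ (b : ℕ) → (b : ℕ) < (q₀.1.1 : ℕ) →
            ι ℚ_[p] (e b) * ι ℚ_[p] (e q₀.1.1) ∈ M := by
          intro b hb2 hbi
          have habf : b < q₀.1.1 := Fin.lt_def.mpr hbi
          have hBj : ι ℚ_[p] (e b) * ι ℚ_[p] (e q₀.1.2) ∈ M :=
            H2 b hb2 (by omega) (Fin.ne_of_val_ne (by omega))
          refine (Submodule.smul_mem_iff M (mul_ne_zero (h0 ⟨(b, q₀.1.1), ⟨hb2, habf⟩⟩)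
            (h0 ⟨(b, q₀.1.1), ⟨hb2, habf⟩⟩))).1 ?_
          have h2 := M.add_mem (M.add_mem (core b q₀.1.1 hb2 habf)
            (M.smul_mem (lam ⟨(b, q₀.1.1), ⟨hb2, habf⟩⟩ * lam q₀) (hsq q₀.1.1)))
            (M.smul_mem (lam ⟨(b, q₀.1.1), ⟨hb2, habf⟩⟩ * lam q₀) hBj)
          convert h2 using 1
          rw [ι_sq_zero]
          module
        have H2' : ∀ a : Fin d, (q₀.1.2 : ℕ) < (a : ℕ) →
            ι ℚ_[p] (e q₀.1.2) * ι ℚ_[p] (e a) ∈ M := by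
          intro a hja
          have ha2 : 2 ≤ (q₀.1.2 : ℕ) := by omega
          have habf : q₀.1.2 < a := Fin.lt_def.mpr hja
          have hIA : ι ℚ_[p] (e q₀.1.1) * ι ℚ_[p] (e a) ∈ M :=
            H1 a (by omega) (Fin.ne_of_val_ne (by omega))
          refine (Submodule.smul_mem_iff M (mul_ne_zero (h0 ⟨(q₀.1.2, a), ⟨ha2, habf⟩⟩)
            (h0 ⟨(q₀.1.2, a), ⟨ha2, habf⟩⟩))).1 ?_
          have h2 := M.add_mem (M.add_mem (core q₀.1.2 a ha2 habf)
            (M.smul_mem (lam ⟨(q₀.1.2, a), ⟨ha2, habf⟩⟩ * lam q₀) hIA))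
            (M.smul_mem (lam ⟨(q₀.1.2, a), ⟨ha2, habf⟩⟩ * lam q₀) (hsq q₀.1.2))
          convert h2 using 1
          rw [ι_sq_zero]
          module
        have main2 : ∀ a b : Fin d, 2 ≤ (a : ℕ) → 2 ≤ (b : ℕ) → (a : ℕ) < (b : ℕ) →
            ι ℚ_[p] (e a) * ι ℚ_[p] (e b) ∈ M := by
          intro a b ha2 hb2 hab
          by_cases hai : a = q₀.1.1
          · by_cases hbj : b = q₀.1.2
            · rw [hai, hbj]; exact mstep1
            · rw [hai] at hab ⊢; exact H1 b hab hbj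
          by_cases hbj : b = q₀.1.2
          · rw [hbj] at hab ⊢; exact H2 a ha2 hab hai
          by_cases hbi : b = q₀.1.1
          · rw [hbi] at hab ⊢; exact H1' a ha2 hab
          by_cases haj : a = q₀.1.2
          · rw [haj] at hab ⊢; exact H2' b hab
          have habf : a < b := Fin.lt_def.mpr hab
          have hIb : ι ℚ_[p] (e q₀.1.1) * ι ℚ_[p] (e b) ∈ M := by
            rcases lt_trichotomy (q₀.1.1 : ℕ) (b : ℕ) with h | h | h
            · exact H1 b h hbj
            · exact absurd (Fin.ext h).symm hbi
            · rw [wedge_swap]; exact M.neg_mem (H1' b hb2 h)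
          have haJ : ι ℚ_[p] (e a) * ι ℚ_[p] (e q₀.1.2) ∈ M := by
            rcases lt_trichotomy (a : ℕ) (q₀.1.2 : ℕ) with h | h | h
            · exact H2 a ha2 h hai
            · exact absurd (Fin.ext h) haj
            · rw [wedge_swap]; exact M.neg_mem (H2' a h)
          refine (Submodule.smul_mem_iff M (mul_ne_zero (h0 ⟨(a, b), ⟨ha2, habf⟩⟩)
            (h0 ⟨(a, b), ⟨ha2, habf⟩⟩))).1 ?_
          have h2 := M.add_mem (M.add_mem (core a b ha2 habf)
            (M.smul_mem (lam ⟨(a, b), ⟨ha2, habf⟩⟩ * lam q₀) hIb))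
            (M.smul_mem (lam ⟨(a, b), ⟨ha2, habf⟩⟩ * lam q₀) haJ)
          convert h2 using 1
          module
        have main2' : ∀ a b : Fin d, 2 ≤ (a : ℕ) → 2 ≤ (b : ℕ) →
            ι ℚ_[p] (e a) * ι ℚ_[p] (e b) ∈ M := by
          intro a b ha hb
          rcases lt_trichotomy (a : ℕ) (b : ℕ) with h | h | h
          · exact main2 a b ha hb h
          · rw [show a = b from Fin.ext h]; exact hsq b
          · rw [wedge_swap]; exact M.neg_mem (main2 b a hb ha h)
        have r0 : ∀ b : Fin d, ι ℚ_[p] (e q₀.1.1) * ι ℚ_[p] (e b) ∈ M →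
            ι ℚ_[p] (e ⟨0, hd0⟩) * ι ℚ_[p] (e b) ∈ M := by
          intro b hb
          have h2 := M.sub_mem (mu1 (e b)) (M.smul_mem (lam q₀) hb)
          convert h2 using 1
          simp only [map_add, map_smul, add_mul, smul_mul_assoc]
          module
        have r1 : ∀ b : Fin d, ι ℚ_[p] (e q₀.1.2) * ι ℚ_[p] (e b) ∈ M →
            ι ℚ_[p] (e ⟨1, hd1⟩) * ι ℚ_[p] (e b) ∈ M := by
          intro b hb
          have h2 := M.sub_mem (mu2 (e b)) (M.smul_mem (lam q₀) hb)
          convert h2 using 1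
          simp only [map_add, map_smul, add_mul, smul_mul_assoc]
          module
        intro a b
        rcases Nat.lt_or_ge (a : ℕ) 2 with ha | ha
        · rcases Nat.lt_or_ge (b : ℕ) 2 with hb | hb
          · rcases (by omega : (a : ℕ) = 0 ∨ (a : ℕ) = 1) with h | h <;>
              rcases (by omega : (b : ℕ) = 0 ∨ (b : ℕ) = 1) with h' | h'
            · rw [show a = b from Fin.ext (h.trans h'.symm)]; exact hsq b
            · rw [show a = (⟨0, hd0⟩ : Fin d) from Fin.ext h,
                show b = (⟨1, hd1⟩ : Fin d) from Fin.ext h']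
              exact m01
            · rw [show a = (⟨1, hd1⟩ : Fin d) from Fin.ext h,
                show b = (⟨0, hd0⟩ : Fin d) from Fin.ext h', wedge_swap]
              exact M.neg_mem m01
            · rw [show a = b from Fin.ext (h.trans h'.symm)]; exact hsq b
          · rcases (by omega : (a : ℕ) = 0 ∨ (a : ℕ) = 1) with h | h
            · rw [show a = (⟨0, hd0⟩ : Fin d) from Fin.ext h]
              exact r0 b (main2' q₀.1.1 b hi₀ hb)
            · rw [show a = (⟨1, hd1⟩ : Fin d) from Fin.ext h]
              exact r1 b (main2' q₀.1.2 b (by omega) hb)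
        · rcases Nat.lt_or_ge (b : ℕ) 2 with hb | hb
          · rcases (by omega : (b : ℕ) = 0 ∨ (b : ℕ) = 1) with h | h
            · rw [wedge_swap, show b = (⟨0, hd0⟩ : Fin d) from Fin.ext h]
              exact M.neg_mem (r0 a (main2' q₀.1.1 a hi₀ ha))
            · rw [wedge_swap, show b = (⟨1, hd1⟩ : Fin d) from Fin.ext h]
              exact M.neg_mem (r1 a (main2' q₀.1.2 a (by omega) ha))
          · exact main2' a b ha hb
    refine le_antisymm hsup_le ?_
    refine Submodule.span_le.2 ?_
    rintro x ⟨v, w, rfl⟩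
    have hrep : ∀ u : Fin d → ℚ_[p], u = ∑ a, u a • e a := fun u => by
      conv_lhs => rw [← Finset.univ_sum_single u]
      exact Finset.sum_congr rfl fun a _ => by
        rw [he a, ← Pi.single_smul, smul_eq_mul, mul_one]
    suffices h : ι ℚ_[p] (∑ a, v a • e a) * ι ℚ_[p] (∑ b, w b • e b) ∈ M by
      rw [← hrep v, ← hrep w] at h; exact h
    have expand : ι ℚ_[p] (∑ a, v a • e a) * ι ℚ_[p] (∑ b, w b • e b)
        = ∑ a : Fin d, ∑ b : Fin d, (v a * w b) • (ι ℚ_[p] (e a) * ι ℚ_[p] (e b)) := by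
      rw [map_sum, map_sum, Finset.sum_mul]
      refine Finset.sum_congr rfl fun a _ => ?_
      rw [Finset.mul_sum]
      refine Finset.sum_congr rfl fun b _ => ?_
      rw [map_smul, map_smul, smul_mul_assoc, mul_smul_comm, smul_smul]
    rw [expand]
    exact Submodule.sum_mem _ fun a _ => Submodule.sum_mem _ fun b _ =>
      Submodule.smul_mem _ _ (key a b)

end
end
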